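/- arXiv:1505.02110 — 4 statements merged into one kernel-verified Lean document; each statement's English description precedes it below -/
import Mathlib

section
/- Let n ≥ 2 and let U be the unitary on ℂⁿ ⊗ ℂⁿ defined by U(e_k ⊗ e_l) = u_{(k-1)n+l} · e_k ⊗ e_{l+1} for l < n, U(e_k ⊗ e_n) = u_{kn} · e_{k+1} ⊗ e_1 for k < n, and U(e_n ⊗ e_n) = u_{n²} · e_1 ⊗ e_1, where the u's are unimodular complex numbers. Then for 1 ≤ r < n, Φ_U(E_{rr}) = (1 − λ_n) E_{rr} + λ_n E_{(r+1)(r+1)}, where β = ∑_q λ_q E_{qq} and Φ_U(Q) = Tr₂(U(Q ⊗ β)U*). -/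
open Matrix Kronecker

/-- Partial trace over the second tensor factor. -/
noncomputable def trace2 {n : ℕ} (T : Matrix (Fin n × Fin n) (Fin n × Fin n) ℂ) :
    Matrix (Fin n) (Fin n) ℂ :=
  Matrix.of fun i k => ∑ j, T (i, j) (k, j)

/-- Cyclic successor on the tensor index set (lexicographic order). -/
def nextIdx {n : ℕ} [NeZero n] (p : Fin n × Fin n) : Fin n × Fin n :=
  if h : (p.2 : ℕ) + 1 < n then (p.1, ⟨(p.2 : ℕ) + 1, h⟩) else (p.1 + 1, 0)

/-- The circulant unitary sending `e_k ⊗ e_l` to `u (k,l)` times the next basis vector. -/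
noncomputable def circU {n : ℕ} [NeZero n] (u : Fin n × Fin n → ℂ) :
    Matrix (Fin n × Fin n) (Fin n × Fin n) ℂ :=
  Matrix.of fun p q => if p = nextIdx q then u q else 0

/-! `U` is a permutation matrix up to phases, so conjugating the diagonal matrix `E_rr ⊗ β` by it
only relabels the diagonal (the phases cancel against their conjugates), and `Tr₂` of a diagonal
matrix is diagonal. The `i`-th entry of `Φ_U(E_rr)` sums the weights `λ_m` of those `e_r ⊗ e_m`
that `U` moves into `e_i ⊗ ℂⁿ`: every `m < n` when `i = r`, and only `m = n` when `i = r + 1`. -/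

section MonomialMatrix

variable {ι 𝕜 : Type*} [Fintype ι] [DecidableEq ι] [RCLike 𝕜]

def monomialMatrix (σ : ι ≃ ι) (u : ι → 𝕜) : Matrix ι ι 𝕜 :=
  of fun p q => if p = σ q then u q else 0

theorem monomialMatrix_mul_diagonal_mul_conjTranspose (σ : ι ≃ ι) {u : ι → 𝕜}
    (hu : ∀ i, ‖u i‖ = 1) (d : ι → 𝕜) :
    monomialMatrix σ u * diagonal d * (monomialMatrix σ u)ᴴ = diagonal (d ∘ σ.symm) := by
  have hunit (i : ι) : u i * star (u i) = 1 := by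
    rw [RCLike.star_def, RCLike.mul_conj, hu, RCLike.ofReal_one, one_pow]
  ext p q
  simp only [monomialMatrix, mul_apply, diagonal_apply, conjTranspose_apply, of_apply,
    ← Equiv.symm_apply_eq, ite_mul, zero_mul, mul_ite, mul_zero, apply_ite star, star_zero,
    Finset.sum_ite_eq', Finset.sum_ite_eq, Finset.mem_univ, if_true, Equiv.symm_symm,
    Equiv.apply_symm_apply, Function.comp_apply]
  split_ifs with h
  · rw [h, mul_right_comm, hunit, one_mul]
  · rfl

end MonomialMatrix

theorem trace2_diagonal {n : ℕ} (d : Fin n × Fin n → ℂ) :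
    trace2 (diagonal d) = diagonal fun i => ∑ j, d (i, j) := by
  ext i k
  by_cases h : i = k <;> simp [trace2, diagonal_apply, h]

theorem Fin.val_neg_one_of_neZero {n : ℕ} [NeZero n] : ((-1 : Fin n) : ℕ) = n - 1 := by
  obtain ⟨m, rfl⟩ : ∃ m, n = m + 1 := ⟨n - 1, (Nat.succ_pred_eq_of_ne_zero (NeZero.ne n)).symm⟩
  simp [Fin.coe_neg_one]

section NextIdx

variable {n : ℕ} [NeZero n]

theorem nextIdx_of_ne_neg_one (i : Fin n) {m : Fin n} (hm : m ≠ -1) :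
    nextIdx (i, m) = (i, m + 1) := by
  have hlt : (m : ℕ) + 1 < n := by
    have := m.isLt
    have : (m : ℕ) ≠ n - 1 := fun h => hm (Fin.ext (h.trans Fin.val_neg_one_of_neZero.symm))
    omega
  rw [nextIdx, dif_pos hlt]
  exact Prod.ext rfl (Fin.ext (by simp [Fin.val_add, Nat.mod_eq_of_lt hlt]))

theorem nextIdx_neg_one (i : Fin n) : nextIdx (i, -1) = (i + 1, 0) := by
  have : ¬((-1 : Fin n) : ℕ) + 1 < n := by
    rw [Fin.val_neg_one_of_neZero]; omega
  rw [nextIdx, dif_neg this]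

theorem nextIdx_ite_neg_one (i m : Fin n) :
    nextIdx (if m = -1 then i - 1 else i, m) = (i, m + 1) := by
  split_ifs with hm
  · rw [hm, nextIdx_neg_one, sub_add_cancel, neg_add_cancel]
  · exact nextIdx_of_ne_neg_one i hm

theorem nextIdx_surjective : Function.Surjective (nextIdx : Fin n × Fin n → Fin n × Fin n) :=
  fun ⟨i, j⟩ => ⟨_, by simpa using nextIdx_ite_neg_one i (j - 1)⟩

noncomputable def nextIdxEquiv : Fin n × Fin n ≃ Fin n × Fin n :=
  Equiv.ofBijective nextIdx nextIdx_surjective.bijective_of_finite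

theorem circU_eq_monomialMatrix (u : Fin n × Fin n → ℂ) :
    circU u = monomialMatrix nextIdxEquiv u :=
  rfl

theorem nextIdxEquiv_symm_apply_add_one (i m : Fin n) :
    nextIdxEquiv.symm (i, m + 1) = (if m = -1 then i - 1 else i, m) :=
  nextIdxEquiv.symm_apply_eq.mpr (nextIdx_ite_neg_one i m).symm

theorem sum_nextIdxEquiv_symm {M : Type*} [AddCommMonoid M] (g : Fin n × Fin n → M)
    (i : Fin n) :
    ∑ j, (g ∘ nextIdxEquiv.symm) (i, j) = g (i - 1, -1) + ∑ m ∈ {-1}ᶜ, g (i, m) := by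
  rw [← Equiv.sum_comp (Equiv.addRight 1), Fintype.sum_eq_add_sum_compl (-1)]
  simp only [Function.comp_apply, Equiv.coe_addRight, nextIdxEquiv_symm_apply_add_one, if_true]
  congr 1
  refine Finset.sum_congr rfl fun m hm => ?_
  rw [if_neg (Finset.mem_compl.mp hm ∘ Finset.mem_singleton.mpr)]

end NextIdx

theorem stmt11 (n : ℕ) [NeZero n] (hn : 2 ≤ n)
    (u : Fin n × Fin n → ℂ) (hu : ∀ p, ‖u p‖ = 1)
    (l : Fin n → ℝ) (hsum : ∑ q, l q = 1)
    (r : Fin n) :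
    trace2 (circU u * (Matrix.single r r 1 ⊗ₖ Matrix.diagonal fun q => (l q : ℂ))
        * (circU u)ᴴ)
      = (1 - (l ⟨n - 1, by omega⟩ : ℂ)) • Matrix.single r r 1
        + (l ⟨n - 1, by omega⟩ : ℂ) • Matrix.single (r + 1) (r + 1) 1 := by
  have hlast : (⟨n - 1, by omega⟩ : Fin n) = -1 := Fin.ext Fin.val_neg_one_of_neZero.symm
  have hsum' : ∑ m ∈ {-1}ᶜ, (l m : ℂ) = 1 - l (-1) := by
    rw [eq_sub_iff_add_eq, add_comm, ← Fintype.sum_eq_add_sum_compl (-1) fun m => (l m : ℂ)]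
    exact_mod_cast hsum
  rw [hlast, ← diagonal_single, ← diagonal_single, diagonal_kronecker_diagonal,
    circU_eq_monomialMatrix, monomialMatrix_mul_diagonal_mul_conjTranspose _ hu,
    trace2_diagonal, ← diagonal_smul, ← diagonal_smul, diagonal_add]
  congr 1
  funext i
  rw [sum_nextIdxEquiv_symm]
  simp only [← Finset.mul_sum, hsum', Pi.smul_apply, smul_eq_mul, Pi.single_apply,
    sub_eq_iff_eq_add]
  ring
end

section
/- Let β be a density matrix on ℂⁿ with all eigenvalues strictly positive. Then there exists a unitary U on ℂⁿ ⊗ ℂⁿ such that the linear map Φ_U − I on Mₙ(ℂ) has rank n² − 1, where Φ_U(Q) = Tr₂(U(Q ⊗ β)U*); consequently Φ_U has a unique fixed point among density matrices. -/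
open Matrix Kronecker ComplexOrder

/-- The swap unitary on `ℂⁿ ⊗ ℂⁿ`. -/
noncomputable def swapU (n : ℕ) : Matrix (Fin n × Fin n) (Fin n × Fin n) ℂ :=
  (1 : Matrix (Fin n × Fin n) (Fin n × Fin n) ℂ).submatrix (Equiv.prodComm (Fin n) (Fin n)) id

lemma swapU_apply (n : ℕ) (p q : Fin n × Fin n) :
    swapU n p q = if p.swap = q then 1 else 0 := by
  simp [swapU, Matrix.one_apply]

lemma swapU_conj (n : ℕ) (M : Matrix (Fin n × Fin n) (Fin n × Fin n) ℂ) (p q : Fin n × Fin n) :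
    (swapU n * M * (swapU n)ᴴ) p q = M p.swap q.swap := by
  simp only [Matrix.mul_apply, Matrix.conjTranspose_apply, swapU_apply, ite_mul, one_mul,
    zero_mul, mul_ite, mul_one, mul_zero, apply_ite star, star_one, star_zero]
  simp [Finset.sum_ite_eq]

lemma swapU_mem (n : ℕ) : swapU n ∈ Matrix.unitaryGroup (Fin n × Fin n) ℂ := by
  rw [Matrix.mem_unitaryGroup_iff]
  show swapU n * (swapU n)ᴴ = 1
  unfold swapU
  rw [Matrix.conjTranspose_submatrix, Matrix.conjTranspose_one]
  rw [show (id : Fin n × Fin n → Fin n × Fin n) = ⇑(Equiv.refl (Fin n × Fin n)) from rfl]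
  rw [Matrix.submatrix_mul_equiv, Matrix.one_mul, Matrix.submatrix_one_equiv]

lemma key (n : ℕ) (β Q : Matrix (Fin n) (Fin n) ℂ) :
    trace2 (swapU n * (Q ⊗ₖ β) * (swapU n)ᴴ) = Q.trace • β := by
  ext i k
  simp only [trace2, Matrix.of_apply, swapU_conj, Prod.swap, Matrix.kroneckerMap_apply,
    Matrix.smul_apply, Matrix.trace, Matrix.diag, smul_eq_mul]
  rw [← Finset.sum_mul]

theorem stmt12 (n : ℕ) (β : Matrix (Fin n) (Fin n) ℂ)
    (hβ : β.PosDef) (hβt : β.trace = 1) :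
    ∃ U : Matrix (Fin n × Fin n) (Fin n × Fin n) ℂ,
      U ∈ Matrix.unitaryGroup (Fin n × Fin n) ℂ ∧
      Module.finrank ℂ (Submodule.span ℂ
        (Set.range fun Q : Matrix (Fin n) (Fin n) ℂ =>
          trace2 (U * (Q ⊗ₖ β) * Uᴴ) - Q)) = n ^ 2 - 1 ∧
      ∃! Q : Matrix (Fin n) (Fin n) ℂ,
        Q.PosSemidef ∧ Q.trace = 1 ∧ trace2 (U * (Q ⊗ₖ β) * Uᴴ) = Q := by
  refine ⟨swapU n, swapU_mem n, ?_, ?_⟩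
  · -- rank statement
    have hβ0 : β ≠ 0 := by
      intro h; rw [h, Matrix.trace_zero] at hβt; exact one_ne_zero hβt.symm
    set L : Matrix (Fin n) (Fin n) ℂ →ₗ[ℂ] Matrix (Fin n) (Fin n) ℂ :=
      { toFun := fun Q => Q.trace • β - Q
        map_add' := fun Q R => by simp [add_smul]; abel
        map_smul' := fun c Q => by simp [smul_sub, smul_smul] }
    have hrange : (Set.range fun Q : Matrix (Fin n) (Fin n) ℂ =>
        trace2 (swapU n * (Q ⊗ₖ β) * (swapU n)ᴴ) - Q) = Set.range L := by
      ext Q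
      simp [L, key]
    rw [hrange, ← LinearMap.coe_range, Submodule.span_eq]
    have hker : LinearMap.ker L = ℂ ∙ β := by
      ext Q
      constructor
      · intro hQ
        have : Q.trace • β - Q = 0 := hQ
        have : Q = Q.trace • β := (sub_eq_zero.mp this).symm
        rw [this]
        exact Submodule.smul_mem _ _ (Submodule.mem_span_singleton_self β)
      · intro hQ
        obtain ⟨c, rfl⟩ := Submodule.mem_span_singleton.mp hQ
        show (c • β).trace • β - c • β = 0
        rw [Matrix.trace_smul, hβt, smul_eq_mul, mul_one]
        simp
    have hrn := LinearMap.finrank_range_add_finrank_ker L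
    rw [hker, finrank_span_singleton hβ0] at hrn
    have hdim : Module.finrank ℂ (Matrix (Fin n) (Fin n) ℂ) = n ^ 2 := by
      rw [Module.finrank_matrix]
      simp [sq]
    rw [hdim] at hrn
    omega
  · -- unique fixed point
    refine ⟨β, ⟨hβ.posSemidef, hβt, by rw [key, hβt, one_smul]⟩, ?_⟩
    rintro Q ⟨-, hQt, hQfix⟩
    rw [key, hQt, one_smul] at hQfix
    exact hQfix.symm
end

section
/- Let β = diag(p₁, p₂) with p₁, p₂ > 0, p₁ + p₂ = 1, and n = 2. Let U be the unitary on ℂ² ⊗ ℂ² defined by U(e₁⊗e₁) = i·(e₁⊗e₂), U(e₁⊗e₂) = e₂⊗e₁, U(e₂⊗e₁) = e₂⊗e₂, U(e₂⊗e₂) = e₁⊗e₁. Then the linear map Φ_U − I on M₂(ℂ) has rank 3, where Φ_U(Q) = Tr₂(U(Q⊗β)U*). -/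
open Matrix Kronecker ComplexOrder

/-- The explicit circulant-type unitary of the two-dimensional example:
`e₁⊗e₁ ↦ i·e₁⊗e₂`, `e₁⊗e₂ ↦ e₂⊗e₁`, `e₂⊗e₁ ↦ e₂⊗e₂`, `e₂⊗e₂ ↦ e₁⊗e₁`. -/
noncomputable def U13 : Matrix (Fin 2 × Fin 2) (Fin 2 × Fin 2) ℂ :=
  Matrix.of fun p q =>
    if q = ((0 : Fin 2), (0 : Fin 2)) then (if p = ((0 : Fin 2), (1 : Fin 2)) then Complex.I else 0)
    else if q = ((0 : Fin 2), (1 : Fin 2)) then (if p = ((1 : Fin 2), (0 : Fin 2)) then 1 else 0)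
    else if q = ((1 : Fin 2), (0 : Fin 2)) then (if p = ((1 : Fin 2), (1 : Fin 2)) then 1 else 0)
    else (if p = ((0 : Fin 2), (0 : Fin 2)) then 1 else 0)

/-! For a unitary `U` and a trace-one `β`, `Φ_U = channel U β` is trace preserving, so the
range of `Φ_U - I` consists of traceless matrices and misses `1`: its rank is below `n²`.
By rank–nullity it is exactly `n² - 1` once the only fixed points of `Φ_U` are scalar matrices.
For the given `U` the fixed-point equations force equal diagonal entries (as `p 1 ≠ 0`) and a
vanishing off-diagonal part, since the off-diagonal equations form a linear system with
determinant `2 p 0 ≠ 0`. -/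

lemma trace_trace2 {n : ℕ} (T : Matrix (Fin n × Fin n) (Fin n × Fin n) ℂ) :
    trace (trace2 T) = trace T := by
  simp [trace2, Matrix.trace, Fintype.sum_prod_type]

noncomputable def channel {n : ℕ} (U : Matrix (Fin n × Fin n) (Fin n × Fin n) ℂ)
    (β : Matrix (Fin n) (Fin n) ℂ) : Matrix (Fin n) (Fin n) ℂ →ₗ[ℂ] Matrix (Fin n) (Fin n) ℂ where
  toFun Q := trace2 (U * (Q ⊗ₖ β) * Uᴴ)
  map_add' Q R := by
    ext i k
    simp [trace2, add_kronecker, Matrix.mul_add, Matrix.add_mul, Finset.sum_add_distrib]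
  map_smul' c Q := by
    ext i k
    simp [trace2, smul_kronecker, Finset.mul_sum]

lemma channel_apply {n : ℕ} (U : Matrix (Fin n × Fin n) (Fin n × Fin n) ℂ)
    (β Q : Matrix (Fin n) (Fin n) ℂ) : channel U β Q = trace2 (U * (Q ⊗ₖ β) * Uᴴ) := rfl

lemma coe_channel_sub_id {n : ℕ} (U : Matrix (Fin n × Fin n) (Fin n × Fin n) ℂ)
    (β : Matrix (Fin n) (Fin n) ℂ) :
    ⇑(channel U β - LinearMap.id : Matrix (Fin n) (Fin n) ℂ →ₗ[ℂ] Matrix (Fin n) (Fin n) ℂ) =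
      fun Q => trace2 (U * (Q ⊗ₖ β) * Uᴴ) - Q := rfl

lemma trace_channel {n : ℕ} {U : Matrix (Fin n × Fin n) (Fin n × Fin n) ℂ}
    {β : Matrix (Fin n) (Fin n) ℂ} (hU : Uᴴ * U = 1) (hβ : trace β = 1)
    (Q : Matrix (Fin n) (Fin n) ℂ) : trace (channel U β Q) = trace Q := by
  rw [channel_apply, trace_trace2, trace_mul_cycle, hU, Matrix.one_mul, trace_kronecker, hβ,
    mul_one]

lemma one_notMem_range_channel_sub_id {n : ℕ} [NeZero n]
    {U : Matrix (Fin n × Fin n) (Fin n × Fin n) ℂ} {β : Matrix (Fin n) (Fin n) ℂ}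
    (hU : Uᴴ * U = 1) (hβ : trace β = 1) :
    (1 : Matrix (Fin n) (Fin n) ℂ) ∉ LinearMap.range (channel U β - LinearMap.id) := by
  rintro ⟨Q, hQ⟩
  have := congrArg trace hQ
  simp only [LinearMap.sub_apply, LinearMap.id_apply, trace_sub, trace_channel hU hβ, sub_self,
    trace_one, Fintype.card_fin] at this
  exact NeZero.ne n (by exact_mod_cast this.symm)

theorem finrank_range_channel_sub_id {n : ℕ} [NeZero n]
    {U : Matrix (Fin n × Fin n) (Fin n × Fin n) ℂ} {β : Matrix (Fin n) (Fin n) ℂ}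
    (hU : Uᴴ * U = 1) (hβ : trace β = 1)
    (hfix : LinearMap.ker (channel U β - LinearMap.id) ≤ ℂ ∙ 1) :
    Module.finrank ℂ (LinearMap.range (channel U β - LinearMap.id)) = n ^ 2 - 1 := by
  have hsum := LinearMap.finrank_range_add_finrank_ker (channel U β - LinearMap.id)
  have hker : Module.finrank ℂ (LinearMap.ker (channel U β - LinearMap.id)) ≤ 1 :=
    (Submodule.finrank_mono hfix).trans (finrank_span_singleton one_ne_zero).le
  have hrange : Module.finrank ℂ (LinearMap.range (channel U β - LinearMap.id)) < n ^ 2 := by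
    have htop : LinearMap.range (channel U β - LinearMap.id) ≠ ⊤ := fun htop =>
      one_notMem_range_channel_sub_id hU hβ (htop ▸ Submodule.mem_top)
    simpa [sq, Module.finrank_matrix] using Submodule.finrank_lt htop
  simp only [Module.finrank_matrix, Fintype.card_fin, Module.finrank_self, mul_one] at hsum
  rw [sq] at hrange ⊢
  omega

lemma conjTranspose_U13_mul_self : U13ᴴ * U13 = 1 := by
  ext ⟨a, b⟩ ⟨c, d⟩
  fin_cases a <;> fin_cases b <;> fin_cases c <;> fin_cases d <;>
    simp [U13, Matrix.mul_apply]

lemma channel_U13_apply (p : Fin 2 → ℂ) (Q : Matrix (Fin 2) (Fin 2) ℂ) :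
    channel U13 (diagonal p) Q =
      !![p 0 * Q 0 0 + p 1 * Q 1 1, Complex.I * p 0 * Q 0 1 + p 1 * Q 1 0;
        -Complex.I * p 0 * Q 1 0 + p 1 * Q 0 1, p 0 * Q 1 1 + p 1 * Q 0 0] := by
  ext i k
  fin_cases i <;> fin_cases k <;>
    simp [channel_apply, trace2, U13, Matrix.mul_apply, Fintype.sum_prod_type,
      Matrix.conjTranspose_apply, Matrix.diagonal, Prod.ext_iff]
  · linear_combination -(Q 0 0 * p 0) * Complex.I_sq
  all_goals ring

lemma ker_channel_U13_sub_id_le {p : Fin 2 → ℂ} (hp : ∀ j, p j ≠ 0) (hsum : p 0 + p 1 = 1) :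
    LinearMap.ker (channel U13 (diagonal p) - LinearMap.id) ≤ ℂ ∙ 1 := by
  intro Q hQ
  rw [LinearMap.mem_ker, LinearMap.sub_apply, LinearMap.id_apply, sub_eq_zero,
    channel_U13_apply] at hQ
  have fix00 := congrFun (congrFun hQ 0) 0
  have fix01 := congrFun (congrFun hQ 0) 1
  have fix10 := congrFun (congrFun hQ 1) 0
  simp only [of_apply, cons_val', cons_val_zero, cons_val_one, empty_val',
    cons_val_fin_one] at fix00 fix01 fix10
  have hQ11 : Q 1 1 = Q 0 0 := by
    refine mul_left_cancel₀ (hp 1) ?_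
    linear_combination fix00 - Q 0 0 * hsum
  -- the off-diagonal system has determinant `(i p 0 - 1)(-i p 0 - 1) - (p 1)² = 2 p 0`
  have hQ01 : Q 0 1 = 0 := by
    refine (mul_eq_zero.mp ?_).resolve_left (mul_ne_zero two_ne_zero (hp 0))
    linear_combination (-Complex.I * p 0 - 1) * fix01 - p 1 * fix10
      + p 0 ^ 2 * Q 0 1 * Complex.I_sq + (p 1 + 1 - p 0) * Q 0 1 * hsum
  have hQ10 : Q 1 0 = 0 := by
    refine (mul_eq_zero.mp ?_).resolve_left (hp 1)
    linear_combination fix01 + (1 - Complex.I * p 0) * hQ01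
  refine Submodule.mem_span_singleton.mpr ⟨Q 0 0, ?_⟩
  ext i j
  fin_cases i <;> fin_cases j <;> simp [hQ11, hQ01, hQ10]

theorem stmt13 (p : Fin 2 → ℝ) (hp : ∀ j, 0 < p j) (hsum : p 0 + p 1 = 1) :
    Module.finrank ℂ (Submodule.span ℂ
      (Set.range fun Q : Matrix (Fin 2) (Fin 2) ℂ =>
        trace2 (U13 * (Q ⊗ₖ Matrix.diagonal fun i => (p i : ℂ)) * U13ᴴ) - Q)) = 3 := by
  have hpC : ∀ j, (p j : ℂ) ≠ 0 := fun j => Complex.ofReal_ne_zero.mpr (hp j).ne'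
  have hsumC : (p 0 : ℂ) + p 1 = 1 := by exact_mod_cast hsum
  have htrace : trace (diagonal fun i => (p i : ℂ)) = 1 := by
    simpa [trace_diagonal, Fin.sum_univ_two] using hsumC
  rw [← coe_channel_sub_id, ← LinearMap.coe_range, Submodule.span_eq,
    finrank_range_channel_sub_id conjTranspose_U13_mul_self htrace
      (ker_channel_U13_sub_id_le hpC hsumC)]
  norm_num
end

section
/- Let β = diag(p₁, p₂) with p₁, p₂ > 0, p₁ + p₂ = 1, and let U = cos(θ)·(I ⊗ I) + i·sin(θ)·(σₓ ⊗ σₓ), where σₓ is the Pauli matrix [[0,1],[1,0]]. Then for every real a with −1/2 ≤ a ≤ 1/2, the matrix Q = [[1/2, a],[a, 1/2]] is a density matrix satisfying Tr₂(U (Q ⊗ β) U*) = Q. In particular the fixed point of Φ_U is not unique. -/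
open Matrix Kronecker ComplexOrder

lemma trace2_kron {n : ℕ} (B C : Matrix (Fin n) (Fin n) ℂ) :
    trace2 (B ⊗ₖ C) = C.trace • B := by
  ext i k
  simp only [trace2, Matrix.trace, Matrix.diag, Matrix.kroneckerMap_apply, Matrix.of_apply,
    Matrix.smul_apply, smul_eq_mul, Finset.sum_mul]
  exact Finset.sum_congr rfl fun x _ => mul_comm _ _

lemma trace2_add {n : ℕ} (T T' : Matrix (Fin n × Fin n) (Fin n × Fin n) ℂ) :
    trace2 (T + T') = trace2 T + trace2 T' := by
  ext i k; simp [trace2, Finset.sum_add_distrib]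

lemma trace2_sub {n : ℕ} (T T' : Matrix (Fin n × Fin n) (Fin n × Fin n) ℂ) :
    trace2 (T - T') = trace2 T - trace2 T' := by
  ext i k; simp [trace2, Finset.sum_sub_distrib]

lemma trace2_smul {n : ℕ} (z : ℂ) (T : Matrix (Fin n × Fin n) (Fin n × Fin n) ℂ) :
    trace2 (z • T) = z • trace2 T := by
  ext i k; simp [trace2, Finset.mul_sum]

set_option maxHeartbeats 2000000 in
theorem stmt17 (θ : ℝ) (p : Fin 2 → ℝ) (hp : ∀ j, 0 < p j) (hsum : p 0 + p 1 = 1)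
    (a : ℝ) (ha₁ : -(1/2 : ℝ) ≤ a) (ha₂ : a ≤ 1/2) :
    let σx : Matrix (Fin 2) (Fin 2) ℂ := !![0, 1; 1, 0]
    let U : Matrix (Fin 2 × Fin 2) (Fin 2 × Fin 2) ℂ :=
      (Real.cos θ : ℂ) • ((1 : Matrix (Fin 2) (Fin 2) ℂ) ⊗ₖ (1 : Matrix (Fin 2) (Fin 2) ℂ))
        + (Complex.I * (Real.sin θ : ℂ)) • (σx ⊗ₖ σx)
    let Q : Matrix (Fin 2) (Fin 2) ℂ := !![1/2, (a : ℂ); (a : ℂ), 1/2]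
    let β : Matrix (Fin 2) (Fin 2) ℂ := Matrix.diagonal fun i => (p i : ℂ)
    Q.PosSemidef ∧ Q.trace = 1 ∧ trace2 (U * (Q ⊗ₖ β) * Uᴴ) = Q := by
  intro σx U Q β
  have hpl : (0:ℝ) ≤ 1/2 + a := by linarith
  have hmi : (0:ℝ) ≤ 1/2 - a := by linarith
  refine ⟨?_, ?_, ?_⟩
  · set s : ℝ := (Real.sqrt (1/2 + a) + Real.sqrt (1/2 - a)) / 2 with hs
    set t : ℝ := (Real.sqrt (1/2 + a) - Real.sqrt (1/2 - a)) / 2 with ht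
    have e1 := Real.sq_sqrt hpl
    have e2 := Real.sq_sqrt hmi
    have hst1 : s^2 + t^2 = 1/2 := by rw [hs, ht]; ring_nf; nlinarith [e1, e2]
    have hst2 : 2 * (s * t) = a := by rw [hs, ht]; nlinarith [e1, e2]
    have : Q = (!![(s:ℂ), t; t, s])ᴴ * !![(s:ℂ), t; t, s] := by
      ext i k
      fin_cases i <;> fin_cases k <;>
        · simp [Q, Matrix.mul_apply, Fin.sum_univ_two, Complex.ext_iff]
          nlinarith [hst1, hst2]
    rw [this]; exact Matrix.posSemidef_conjTranspose_mul_self _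
  · simp [Q, Matrix.trace_fin_two]; norm_num
  · set c : ℂ := (Real.cos θ : ℂ) with hc
    set w : ℂ := Complex.I * (Real.sin θ : ℂ) with hw
    set X : Matrix (Fin 2 × Fin 2) (Fin 2 × Fin 2) ℂ := σx ⊗ₖ σx with hX
    have hU : U = c • (1 : Matrix (Fin 2 × Fin 2) (Fin 2 × Fin 2) ℂ) + w • X := by
      rw [show U = c • ((1 : Matrix (Fin 2) (Fin 2) ℂ) ⊗ₖ 1) + w • (σx ⊗ₖ σx) from rfl,
        Matrix.one_kronecker_one]
    have hσxH : σxᴴ = σx := by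
      ext i k; fin_cases i <;> fin_cases k <;> simp [σx]
    have hXH : Xᴴ = X := by
      ext ⟨i, j⟩ ⟨k, l⟩
      fin_cases i <;> fin_cases j <;> fin_cases k <;> fin_cases l <;>
        simp [X, σx, Matrix.conjTranspose_apply]
    have hUH : Uᴴ = c • (1 : Matrix (Fin 2 × Fin 2) (Fin 2 × Fin 2) ℂ) - w • X := by
      rw [hU]
      rw [conjTranspose_add, conjTranspose_smul, conjTranspose_smul, conjTranspose_one, hXH]
      have h1 : star c = c := by rw [hc, Complex.star_def, Complex.conj_ofReal]
      have h2 : star w = -w := by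
        rw [hw, star_mul', Complex.star_def, Complex.conj_ofReal, Complex.conj_I]; ring
      rw [h1, h2, neg_smul, sub_eq_add_neg]
    have key : U * (Q ⊗ₖ β) * Uᴴ
        = (c*c) • (Q ⊗ₖ β) + (c*w) • (X * (Q ⊗ₖ β)) - (c*w) • ((Q ⊗ₖ β) * X)
          - (w*w) • (X * (Q ⊗ₖ β) * X) := by
      rw [hUH, hU]
      simp only [Matrix.add_mul, Matrix.mul_sub, Matrix.smul_mul, Matrix.mul_smul,
        Matrix.one_mul, Matrix.mul_one, smul_smul]
      module
    rw [key, trace2_sub, trace2_sub, trace2_add, trace2_smul, trace2_smul, trace2_smul,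
      trace2_smul]
    have hβtr : β.trace = 1 := by
      simp [β, Matrix.trace_fin_two, Matrix.diagonal]
      norm_cast
    have hXA : X * (Q ⊗ₖ β) = (σx * Q) ⊗ₖ (σx * β) := by
      rw [hX, ← Matrix.mul_kronecker_mul]
    have hAX : (Q ⊗ₖ β) * X = (Q * σx) ⊗ₖ (β * σx) := by
      rw [hX, ← Matrix.mul_kronecker_mul]
    have hXAX : X * (Q ⊗ₖ β) * X = (σx * Q * σx) ⊗ₖ (σx * β * σx) := by
      rw [hXA, hX, ← Matrix.mul_kronecker_mul]
    rw [hXAX, hXA, hAX, trace2_kron, trace2_kron, trace2_kron, trace2_kron, hβtr]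
    have h1 : (σx * β).trace = 0 := by
      simp [σx, β, Matrix.trace_fin_two, Matrix.mul_apply, Fin.sum_univ_two, Matrix.diagonal_apply, Matrix.vecMul, dotProduct]
    have h2 : (β * σx).trace = 0 := by
      simp [σx, β, Matrix.trace_fin_two, Matrix.mul_apply, Fin.sum_univ_two, Matrix.diagonal_apply, Matrix.vecMul, dotProduct]
    have h3 : (σx * β * σx).trace = 1 := by
      rw [Matrix.trace_mul_cycle]
      have : σx * (σx * β) = β := by
        ext i k; fin_cases i <;> fin_cases k <;>
          simp [σx, β, Matrix.mul_apply, Fin.sum_univ_two, Matrix.diagonal_apply, Matrix.vecMul, dotProduct]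
      rw [← Matrix.mul_assoc] at this
      rw [this, hβtr]
    rw [h1, h2, h3]
    have hcw : c * c - w * w = 1 := by
      rw [hc, hw]
      have h2 : ((Real.cos θ : ℂ))^2 + ((Real.sin θ : ℂ))^2 = 1 := by
        norm_cast; exact Real.cos_sq_add_sin_sq θ
      linear_combination h2 - ((Real.sin θ : ℂ))^2 * Complex.I_mul_I
    have hQs : σx * Q * σx = Q := by
      ext i k
      fin_cases i <;> fin_cases k <;>
        simp [σx, Q, Matrix.mul_apply, Fin.sum_univ_two]
    simp only [zero_smul, smul_zero, one_smul, sub_zero, add_zero]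
    rw [hQs, ← sub_smul, hcw, one_smul]
end
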